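/- arXiv:2508.18449 — 3 statements merged into one kernel-verified Lean document; each statement's English description precedes it below -/
import Mathlib

section
/- Let (N, c₁) and (N', c₂) be two cooperative minimization games with transferable utility, b ≥ 0, and f : N → N' a surjective function such that for every coalition S ⊆ N' one has c₂(S) = b · c₁(f⁻¹(S)). If α is a core-stable allocation for (N, c₁), then the allocation α'(j) = b · Σ_{i ∈ f⁻¹(j)} α(i) is core-stable for (N', c₂). -/
/-- Transferring a core-stable allocation of a minimization game
through a surjective agent map `f` with `c₂(S) = b · c₁(f⁻¹(S))`. -/
theorem surjective_transfer_core_stable_min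
    {N N' : Type*} [Fintype N] [Fintype N'] [DecidableEq N']
    (c₁ : Finset N → ℝ) (c₂ : Finset N' → ℝ)
    (hc₁empty : c₁ ∅ = 0) (hc₁nn : ∀ S, 0 ≤ c₁ S) (hc₂nn : ∀ S, 0 ≤ c₂ S)
    (b : ℝ) (hb : 0 ≤ b)
    (f : N → N') (hf : Function.Surjective f)
    (hc : ∀ S : Finset N', c₂ S = b * c₁ (Finset.univ.filter fun i => f i ∈ S))
    (α : N → ℝ) (hαnn : ∀ i, 0 ≤ α i)
    (hpre : ∑ i, α i = c₁ Finset.univ)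
    (hcore : ∀ S : Finset N, ∑ i ∈ S, α i ≤ c₁ S) :
    (∀ j, 0 ≤ b * ∑ i ∈ Finset.univ.filter (fun i => f i = j), α i) ∧
    (∑ j, b * ∑ i ∈ Finset.univ.filter (fun i => f i = j), α i = c₂ Finset.univ) ∧
    (∀ S : Finset N',
      ∑ j ∈ S, (b * ∑ i ∈ Finset.univ.filter (fun i => f i = j), α i) ≤ c₂ S) := by
  have key : ∀ S : Finset N',
      ∑ j ∈ S, (b * ∑ i ∈ Finset.univ.filter (fun i => f i = j), α i)
        = b * ∑ i ∈ Finset.univ.filter (fun i => f i ∈ S), α i := by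
    intro S
    rw [← Finset.mul_sum]
    congr 1
    rw [Finset.sum_fiberwise_eq_sum_filter Finset.univ S f α]
  refine ⟨fun j => mul_nonneg hb (Finset.sum_nonneg fun i _ => hαnn i), ?_, ?_⟩
  · rw [key, hc]
    simp [hpre]
  · intro S
    rw [key, hc]
    exact mul_le_mul_of_nonneg_left (hcore _) hb
end

section
/- Let (N, c) be a cooperative game in the minimization formulation, and suppose there exist three distinct agents a₁, a₂, a₃ ∈ N and a number k such that c(N) ≥ k + 2, c(N \ {a₁, a₂, a₃}) ≤ k, and c({aᵢ, aⱼ}) ≤ 1 for all i ≠ j in {1,2,3}. Then (N, c) admits no core-stable allocation. -/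
/-- In a minimization game, if `c(N) ≥ k + 2`,
`c(N \ {a₁,a₂,a₃}) ≤ k`, and `c({aᵢ,aⱼ}) ≤ 1` for the three pairs of three
distinct agents, then the game admits no core-stable allocation. -/
theorem no_core_stable_of_triangle_gadget
    {N : Type*} [Fintype N] [DecidableEq N]
    (c : Finset N → ℝ) (hnn : ∀ S, 0 ≤ c S)
    (a₁ a₂ a₃ : N) (h12 : a₁ ≠ a₂) (h13 : a₁ ≠ a₃) (h23 : a₂ ≠ a₃)
    (k : ℝ)
    (hN : k + 2 ≤ c Finset.univ)
    (hrest : c (Finset.univ \ {a₁, a₂, a₃}) ≤ k)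
    (hp12 : c {a₁, a₂} ≤ 1) (hp13 : c {a₁, a₃} ≤ 1) (hp23 : c {a₂, a₃} ≤ 1) :
    ¬ ∃ α : N → ℝ, (∀ i, 0 ≤ α i) ∧ (∑ i, α i = c Finset.univ) ∧
      ∀ S : Finset N, ∑ i ∈ S, α i ≤ c S := by
  rintro ⟨α, hpos, htot, hcore⟩
  have hT : ({a₁, a₂, a₃} : Finset N) ⊆ Finset.univ := Finset.subset_univ _
  have hsplit : ∑ i ∈ (Finset.univ \ {a₁, a₂, a₃}), α i
      + ∑ i ∈ ({a₁, a₂, a₃} : Finset N), α i = ∑ i, α i :=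
    Finset.sum_sdiff hT
  have hS3 : ∑ i ∈ ({a₁, a₂, a₃} : Finset N), α i = α a₁ + α a₂ + α a₃ := by
    rw [Finset.sum_insert (by simp [h12, h13]), Finset.sum_insert (by simp [h23]),
      Finset.sum_singleton]; ring
  have h1 : ∑ i ∈ ({a₁, a₂} : Finset N), α i = α a₁ + α a₂ := by
    rw [Finset.sum_insert (by simp [h12]), Finset.sum_singleton]
  have h2 : ∑ i ∈ ({a₁, a₃} : Finset N), α i = α a₁ + α a₃ := by
    rw [Finset.sum_insert (by simp [h13]), Finset.sum_singleton]
  have h3 : ∑ i ∈ ({a₂, a₃} : Finset N), α i = α a₂ + α a₃ := by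
    rw [Finset.sum_insert (by simp [h23]), Finset.sum_singleton]
  have c12 := hcore {a₁, a₂}
  have c13 := hcore {a₁, a₃}
  have c23 := hcore {a₂, a₃}
  have crest := hcore (Finset.univ \ {a₁, a₂, a₃})
  linarith
end

section
/- Let φ be a 3-CNF formula with n variables and m clauses and let G be the graph from the standard 3-SAT-to-Dominating-Set reduction with a special vertex v* adjacent to all literal and clause vertices. If G has a dominating set of size exactly n, then φ is satisfiable (a satisfying assignment is obtained by setting x true iff v_x belongs to the dominating set); moreover, if φ is unsatisfiable then G has a dominating set of size n + 1 (namely all dummy vertices together with v*) and every dominating set has size at least n + 1. -/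
/-- A literal is a variable together with a polarity. -/
abbrev Lit (X : Type*) := X × Bool

/-- Vertices of the 3-SAT-to-Dominating-Set reduction graph: literal vertices,
dummy vertices (one per variable), clause vertices, and the special vertex. -/
abbrev SatDsVtx (X C : Type*) := Lit X ⊕ (X ⊕ (C ⊕ Unit))

/-- The base relation of the reduction graph. -/
def satDsRel {X C : Type*} [DecidableEq X] (cl : C → Finset (Lit X)) :
    SatDsVtx X C → SatDsVtx X C → Prop
  | Sum.inl ℓ, Sum.inl ℓ' => ℓ.1 = ℓ'.1 ∧ ℓ.2 ≠ ℓ'.2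
  | Sum.inl ℓ, Sum.inr (Sum.inl x) => ℓ.1 = x
  | Sum.inl ℓ, Sum.inr (Sum.inr (Sum.inl c)) => ℓ ∈ cl c
  | Sum.inl _, Sum.inr (Sum.inr (Sum.inr _)) => True
  | Sum.inr (Sum.inr (Sum.inl _)), Sum.inr (Sum.inr (Sum.inr _)) => True
  | _, _ => False

/-- The 3-SAT-to-Dominating-Set reduction graph. -/
def satDsGraph {X C : Type*} [DecidableEq X] (cl : C → Finset (Lit X)) :
    SimpleGraph (SatDsVtx X C) :=
  SimpleGraph.fromRel (satDsRel cl)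

/-- `D` is a dominating set of the graph `H`. -/
def IsDomSet {W : Type*} (H : SimpleGraph W) (D : Finset W) : Prop :=
  ∀ w : W, w ∈ D ∨ ∃ d ∈ D, H.Adj w d

section Aux

variable {X C : Type*} [DecidableEq X] [DecidableEq C]

/-- The triangle of vertices associated to a variable. -/
def tri (x : X) : Finset (SatDsVtx X C) :=
  {Sum.inl (x, true), Sum.inl (x, false), Sum.inr (Sum.inl x)}

lemma mem_tri {x : X} {v : SatDsVtx X C} :
    v ∈ (tri x : Finset (SatDsVtx X C)) ↔
      v = Sum.inl (x, true) ∨ v = Sum.inl (x, false) ∨ v = Sum.inr (Sum.inl x) := by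
  simp [tri]

lemma tri_disjoint {x y : X} (h : x ≠ y) :
    Disjoint (tri x : Finset (SatDsVtx X C)) (tri y) := by
  rw [Finset.disjoint_left]
  intro v hv hv'
  rw [mem_tri] at hv hv'
  rcases hv with h1 | h1 | h1 <;> rcases hv' with h2 | h2 | h2 <;>
    simp_all

variable (cl : C → Finset (Lit X))

lemma domset_tri_nonempty {D : Finset (SatDsVtx X C)}
    (hD : IsDomSet (satDsGraph cl) D) (x : X) : (D ∩ tri x).Nonempty := by
  rcases hD (Sum.inr (Sum.inl x)) with h | ⟨d, hdD, hadj⟩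
  · exact ⟨Sum.inr (Sum.inl x), Finset.mem_inter.2 ⟨h, by simp [mem_tri]⟩⟩
  · rcases d with ℓ | (y | (c | u))
    · refine ⟨Sum.inl ℓ, Finset.mem_inter.2 ⟨hdD, ?_⟩⟩
      simp only [satDsGraph, SimpleGraph.fromRel_adj, satDsRel] at hadj
      obtain ⟨x', b⟩ := ℓ
      rcases hadj with ⟨-, h | h⟩
      · exact absurd h not_false
      · simp only at h
        subst h
        cases b <;> simp [mem_tri]
    · exfalso
      simp only [satDsGraph, SimpleGraph.fromRel_adj, satDsRel] at hadj
      tauto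
    · exfalso
      simp only [satDsGraph, SimpleGraph.fromRel_adj, satDsRel] at hadj
      tauto
    · exfalso
      simp only [satDsGraph, SimpleGraph.fromRel_adj, satDsRel] at hadj
      tauto

variable [Fintype X]

lemma domset_card_ge {D : Finset (SatDsVtx X C)}
    (hD : IsDomSet (satDsGraph cl) D) : Fintype.card X ≤ D.card := by
  have hdisj : ∀ x ∈ (Finset.univ : Finset X), ∀ y ∈ (Finset.univ : Finset X),
      x ≠ y → Disjoint (D ∩ tri x) (D ∩ tri y) := fun x _ y _ hxy =>
    Finset.disjoint_of_subset_left Finset.inter_subset_right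
      (Finset.disjoint_of_subset_right Finset.inter_subset_right (tri_disjoint hxy))
  have hsub : (Finset.univ.biUnion fun x : X => D ∩ tri x) ⊆ D := by
    intro v hv
    rcases Finset.mem_biUnion.1 hv with ⟨x, -, hx⟩
    exact (Finset.mem_inter.1 hx).1
  calc Fintype.card X = ∑ x : X, 1 := by simp
    _ ≤ ∑ x : X, (D ∩ tri x).card :=
        Finset.sum_le_sum fun x _ => Finset.card_pos.2 (domset_tri_nonempty cl hD x)
    _ = (Finset.univ.biUnion fun x : X => D ∩ tri x).card :=
        (Finset.card_biUnion hdisj).symm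
    _ ≤ D.card := Finset.card_le_card hsub

lemma domset_card_eq_struct {D : Finset (SatDsVtx X C)}
    (hD : IsDomSet (satDsGraph cl) D) (hcard : D.card = Fintype.card X) :
    (∀ x : X, (D ∩ tri x).card = 1) ∧ (∀ v ∈ D, ∃ x : X, v ∈ (tri x : Finset (SatDsVtx X C))) := by
  have hdisj : ∀ x ∈ (Finset.univ : Finset X), ∀ y ∈ (Finset.univ : Finset X),
      x ≠ y → Disjoint (D ∩ tri x) (D ∩ tri y) := fun x _ y _ hxy =>
    Finset.disjoint_of_subset_left Finset.inter_subset_right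
      (Finset.disjoint_of_subset_right Finset.inter_subset_right (tri_disjoint hxy))
  have hsub : (Finset.univ.biUnion fun x : X => D ∩ tri x) ⊆ D := by
    intro v hv
    rcases Finset.mem_biUnion.1 hv with ⟨x, -, hx⟩
    exact (Finset.mem_inter.1 hx).1
  have h1 : ∀ x : X, 1 ≤ (D ∩ tri x).card :=
    fun x => Finset.card_pos.2 (domset_tri_nonempty cl hD x)
  have hle : ∑ x : X, (D ∩ tri x).card ≤ Fintype.card X := by
    rw [← Finset.card_biUnion hdisj]
    exact hcard ▸ Finset.card_le_card hsub
  have hge : Fintype.card X ≤ ∑ x : X, (D ∩ tri x).card := by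
    calc Fintype.card X = ∑ x : X, 1 := by simp
      _ ≤ _ := Finset.sum_le_sum fun x _ => h1 x
  have hsum : ∑ x : X, (D ∩ tri x).card = Fintype.card X := le_antisymm hle hge
  have heach : ∀ x : X, (D ∩ tri x).card = 1 := by
    intro x
    by_contra hne
    have h2 : 2 ≤ (D ∩ tri x).card := by have := h1 x; omega
    have hadd : (D ∩ tri x).card + ∑ y ∈ Finset.univ.erase x, (D ∩ tri y).card
        = ∑ y : X, (D ∩ tri y).card :=
      Finset.add_sum_erase Finset.univ (fun y => (D ∩ tri y).card) (Finset.mem_univ x)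
    have hrest : (Finset.univ.erase x).card ≤ ∑ y ∈ Finset.univ.erase x, (D ∩ tri y).card := by
      calc (Finset.univ.erase x).card = ∑ y ∈ Finset.univ.erase x, 1 := by simp
        _ ≤ _ := Finset.sum_le_sum fun y _ => h1 y
    have hcardX : (Finset.univ.erase x).card = Fintype.card X - 1 := by
      rw [Finset.card_erase_of_mem (Finset.mem_univ x), Finset.card_univ]
    have hpos : 1 ≤ Fintype.card X := Fintype.card_pos_iff.2 ⟨x⟩
    omega
  refine ⟨heach, ?_⟩
  have hbcard : (Finset.univ.biUnion fun x : X => D ∩ tri x).card = D.card := by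
    rw [Finset.card_biUnion hdisj, hsum, hcard]
  have hDeq : D = Finset.univ.biUnion fun x : X => D ∩ tri x :=
    (Finset.eq_of_subset_of_card_le hsub (le_of_eq hbcard.symm)).symm
  intro v hv
  rw [hDeq] at hv
  rcases Finset.mem_biUnion.1 hv with ⟨x, -, hx⟩
  exact ⟨x, (Finset.mem_inter.1 hx).2⟩

lemma backward_main {D : Finset (SatDsVtx X C)}
    (hD : IsDomSet (satDsGraph cl) D) (hcard : D.card = Fintype.card X) :
    ∀ c, ∃ ℓ ∈ cl c,
      (decide ((Sum.inl (ℓ.1, true) : SatDsVtx X C) ∈ D)) = ℓ.2 := by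
  obtain ⟨heach, hall⟩ := domset_card_eq_struct cl hD hcard
  intro c
  rcases hD (Sum.inr (Sum.inr (Sum.inl c))) with h | ⟨d, hdD, hadj⟩
  · exfalso
    rcases hall _ h with ⟨x, hx⟩
    simp [mem_tri] at hx
  · rcases d with ℓ | (y | (c' | u))
    · simp only [satDsGraph, SimpleGraph.fromRel_adj, satDsRel] at hadj
      have hℓ : ℓ ∈ cl c := by tauto
      refine ⟨ℓ, hℓ, ?_⟩
      obtain ⟨x, b⟩ := ℓ
      cases b
      · -- negative literal: need Sum.inl (x,true) ∉ D
        simp only [decide_eq_false_iff_not]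
        intro hmem
        have h1 : (Sum.inl (x, true) : SatDsVtx X C) ∈ D ∩ tri x :=
          Finset.mem_inter.2 ⟨hmem, by simp [mem_tri]⟩
        have h2 : (Sum.inl (x, false) : SatDsVtx X C) ∈ D ∩ tri x :=
          Finset.mem_inter.2 ⟨hdD, by simp [mem_tri]⟩
        rcases Finset.card_eq_one.1 (heach x) with ⟨a, ha⟩
        rw [ha, Finset.mem_singleton] at h1 h2
        rw [← h2] at h1
        simp at h1
      · simp only [decide_eq_true_iff]
        exact hdD
    · exfalso
      simp only [satDsGraph, SimpleGraph.fromRel_adj, satDsRel] at hadj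
      tauto
    · exfalso
      simp only [satDsGraph, SimpleGraph.fromRel_adj, satDsRel] at hadj
      tauto
    · exfalso
      rcases hall _ hdD with ⟨x, hx⟩
      simp [mem_tri] at hx

end Aux

/-- If the reduction graph has a dominating set `D` of size
exactly `n`, then setting `x` true iff `v_x ∈ D` satisfies the formula;
moreover, if the formula is unsatisfiable, the graph has a dominating set of
size `n + 1` and every dominating set has size at least `n + 1`. -/
theorem satDs_backward_and_unsat
    {X C : Type*} [Fintype X] [DecidableEq X] [Fintype C] [DecidableEq C]
    (cl : C → Finset (Lit X)) (h3 : ∀ c, (cl c).card = 3) :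
    (∀ D : Finset (SatDsVtx X C), IsDomSet (satDsGraph cl) D →
      D.card = Fintype.card X →
      ∀ c, ∃ ℓ ∈ cl c,
        (decide ((Sum.inl (ℓ.1, true) : SatDsVtx X C) ∈ D)) = ℓ.2) ∧
    ((¬ ∃ σ : X → Bool, ∀ c, ∃ ℓ ∈ cl c, σ ℓ.1 = ℓ.2) →
      (∃ D : Finset (SatDsVtx X C),
        IsDomSet (satDsGraph cl) D ∧ D.card = Fintype.card X + 1) ∧
      (∀ D : Finset (SatDsVtx X C),
        IsDomSet (satDsGraph cl) D → Fintype.card X + 1 ≤ D.card)) := by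
  constructor
  · intro D hD hcard
    exact backward_main cl hD hcard
  · intro hunsat
    constructor
    · refine ⟨(Finset.univ.image fun x : X => (Sum.inr (Sum.inl x) : SatDsVtx X C)) ∪
        {Sum.inr (Sum.inr (Sum.inr ()))}, ?_, ?_⟩
      · intro w
        rcases w with ℓ | (y | (c | u))
        · right
          refine ⟨Sum.inr (Sum.inr (Sum.inr ())), by simp, ?_⟩
          simp [satDsGraph, SimpleGraph.fromRel_adj, satDsRel]
        · left; simp
        · right
          refine ⟨Sum.inr (Sum.inr (Sum.inr ())), by simp, ?_⟩
          simp [satDsGraph, SimpleGraph.fromRel_adj, satDsRel]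
        · left; simp
      · rw [Finset.card_union_of_disjoint (by simp),
          Finset.card_image_of_injective _ (fun a b h => by simpa using h)]
        simp
    · intro D hD
      have hge := domset_card_ge cl hD
      rcases lt_or_eq_of_le hge with h | h
      · omega
      · exact absurd ⟨fun x => decide ((Sum.inl (x, true) : SatDsVtx X C) ∈ D),
          backward_main cl hD h.symm⟩ hunsat
end
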